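/- arXiv:0811.2572 — 5 statements merged into one kernel-verified Lean document; each statement's English description precedes it below -/
import Mathlib

section
/- Let G be a perfect graph on n ≥ 1 vertices, let S_1, …, S_k be a greedy stable-set sequence of G, and let g̃ be the entropy of the associated greedy point. Then for every real δ with 0 < δ < 1, g̃ ≤ (1/(1−δ))·(H(G) + log₂(1/δ)). -/
/-- A stable (independent) set of a simple graph, as a `Finset` of vertices. -/
def IsStableSet {V : Type*} (G : SimpleGraph V) (S : Finset V) : Prop :=
  ∀ v ∈ S, ∀ w ∈ S, ¬ G.Adj v w

/-- The stable set polytope `STAB(G)`: the convex hull of characteristic vectors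
of stable sets of `G`. -/
noncomputable def STAB {V : Type*} [Fintype V] [DecidableEq V] (G : SimpleGraph V) :
    Set (V → ℝ) :=
  convexHull ℝ {x | ∃ S : Finset V, IsStableSet G S ∧
    x = fun v => if v ∈ S then (1 : ℝ) else 0}

/-- The (Körner) entropy of a graph `G` on `n` vertices:
`H(G) = min_{x ∈ STAB(G), x > 0} -(1/n) ∑_v log₂ x_v`. -/
noncomputable def graphEntropy {V : Type*} [Fintype V] [DecidableEq V]
    (G : SimpleGraph V) : ℝ :=
  sInf {h : ℝ | ∃ x ∈ STAB G, (∀ v, 0 < x v) ∧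
    h = -(1 / (Fintype.card V : ℝ)) * ∑ v, Real.logb 2 (x v)}

/-- A graph is perfect if every induced subgraph has clique number equal to
chromatic number. -/
def IsPerfect {V : Type*} (G : SimpleGraph V) : Prop :=
  ∀ U : Set V, ((G.induce U).cliqueNum : ℕ∞) = (G.induce U).chromaticNumber

/-- `S 0, S 1, …, S (k-1)` is a greedy stable-set sequence of `G`: the `S i` are
pairwise disjoint stable sets partitioning the vertex set, and each `S i` is a
maximum-cardinality stable set among those avoiding `S 0 ∪ ⋯ ∪ S (i-1)`. -/
def IsGreedySeq {V : Type*} [Fintype V] (G : SimpleGraph V) {k : ℕ}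
    (S : Fin k → Finset V) : Prop :=
  (∀ i, IsStableSet G (S i)) ∧
  (∀ i j, i ≠ j → Disjoint (S i) (S j)) ∧
  (∀ v : V, ∃ i, v ∈ S i) ∧
  (∀ i : Fin k, ∀ T : Finset V, IsStableSet G T →
    (∀ v ∈ T, ∀ j, j < i → v ∉ S j) → T.card ≤ (S i).card)

/-- The entropy `g̃ = ∑_i (|S i|/n) log₂ (n/|S i|)` of the greedy point
`x̃ = ∑_i (|S i|/n) χ^{S i}` associated to a greedy stable-set sequence. -/
noncomputable def greedyEntropy {V : Type*} [Fintype V] {k : ℕ}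
    (S : Fin k → Finset V) : ℝ :=
  ∑ i, ((S i).card / (Fintype.card V : ℝ)) *
    Real.logb 2 ((Fintype.card V : ℝ) / (S i).card)

/-!
For `x ∈ STAB(G)` with positive coordinates put `aᵢ = |Sᵢ|/n` and `dᵢ = x(Sᵢ)/n`. The vertices
left after `S₀, …, Sᵢ₋₁` induce a graph of stability number `|Sᵢ|`, so the remaining mass
`Dᵢ = ∑_{j ≥ i} dⱼ` is at most `aᵢ`. Concavity of `log` on each class gives
`-(1/n) ∑ᵥ log xᵥ ≥ ∑ᵢ aᵢ log (aᵢ/dᵢ)`, and Jensen's inequality over the classes with weights `aᵢ`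
reduces the claim to `∑ᵢ dᵢ aᵢ^(δ-1) ≤ 1/δ`. Since `dᵢ = Dᵢ - Dᵢ₊₁`, this sum telescopes against the
potential `ψ(a, D) = (1-δ) a^δ + δ D a^(δ-1)`, which by weighted AM-GM is nondecreasing in `a ≥ D`:
`δ ∑ᵢ dᵢ aᵢ^(δ-1) ≤ ψ(a₀, D₀) ≤ a₀^δ ≤ 1`.
-/

open Finset Real

theorem concaveOn_logb_two_Ioi : ConcaveOn ℝ (Set.Ioi 0) (logb 2) := by
  have hlogb : logb 2 = fun x => (log 2)⁻¹ • log x := by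
    funext x
    rw [logb, div_eq_inv_mul, smul_eq_mul]
  rw [hlogb]
  exact strictConcaveOn_log_Ioi.concaveOn.smul (inv_nonneg.2 (log_nonneg one_le_two))

theorem sum_mul_logb_le_logb_sum_mul {ι : Type*} {t : Finset ι} {w p : ι → ℝ}
    (hw : ∀ i ∈ t, 0 ≤ w i) (hw1 : ∑ i ∈ t, w i = 1) (hp : ∀ i ∈ t, w i ≠ 0 → 0 < p i) :
    ∑ i ∈ t, w i * logb 2 (p i) ≤ logb 2 (∑ i ∈ t, w i * p i) := by
  have hsupp {f : ι → ℝ} : ∑ i ∈ t with w i ≠ 0, w i * f i = ∑ i ∈ t, w i * f i :=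
    sum_filter_of_ne fun _ _ h => left_ne_zero_of_mul h
  rw [← hsupp, ← hsupp]
  simpa only [smul_eq_mul] using concaveOn_logb_two_Ioi.le_map_sum
    (fun i hi => hw i (mem_filter.1 hi).1) ((sum_filter_ne_zero t).trans hw1)
    (fun i hi => hp i (mem_filter.1 hi).1 (mem_filter.1 hi).2)

theorem sum_logb_le_card_mul_logb_sum_div {ι : Type*} (s : Finset ι) {x : ι → ℝ}
    (hx : ∀ i ∈ s, 0 < x i) :
    ∑ i ∈ s, logb 2 (x i) ≤ s.card * logb 2 ((∑ i ∈ s, x i) / s.card) := by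
  rcases s.eq_empty_or_nonempty with rfl | hs
  · simp
  have hcard : (0 : ℝ) < s.card := by exact_mod_cast hs.card_pos
  have h := sum_mul_logb_le_logb_sum_mul (t := s) (w := fun _ => (s.card : ℝ)⁻¹) (p := x)
    (fun _ _ => by positivity) (by simp [hcard.ne']) (fun i hi _ => hx i hi)
  rw [← mul_sum, ← mul_sum] at h
  rwa [← inv_mul_le_iff₀ hcard, ← inv_mul_eq_div (s.card : ℝ)]

theorem rpow_le_one_sub_mul_rpow_add {δ a b : ℝ} (hδ0 : 0 ≤ δ) (hδ1 : δ ≤ 1) (hb : 0 ≤ b)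
    (ha : 0 < a) : b ^ δ ≤ (1 - δ) * a ^ δ + δ * b * a ^ (δ - 1) := by
  have h := geom_mean_le_arith_mean2_weighted hδ0 (sub_nonneg.2 hδ1) hb ha.le (by ring)
  have hcancel : a ^ (1 - δ) * a ^ (δ - 1) = 1 := by rw [← rpow_add ha]; simp
  have hmul : a * a ^ (δ - 1) = a ^ δ := by rw [rpow_sub_one ha.ne']; field_simp
  calc b ^ δ = b ^ δ * a ^ (1 - δ) * a ^ (δ - 1) := by rw [mul_assoc, hcancel, mul_one]
    _ ≤ (δ * b + (1 - δ) * a) * a ^ (δ - 1) := by gcongr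
    _ = (1 - δ) * a ^ δ + δ * b * a ^ (δ - 1) := by rw [← hmul]; ring

noncomputable def greedyPotential (δ a D : ℝ) : ℝ := (1 - δ) * a ^ δ + δ * D * a ^ (δ - 1)

section Potential

variable {δ : ℝ}

theorem greedyPotential_nonneg (hδ0 : 0 ≤ δ) (hδ1 : δ ≤ 1) {a D : ℝ} (ha : 0 ≤ a) (hD : 0 ≤ D) :
    0 ≤ greedyPotential δ a D :=
  add_nonneg (mul_nonneg (sub_nonneg.2 hδ1) (rpow_nonneg ha δ))
    (mul_nonneg (mul_nonneg hδ0 hD) (rpow_nonneg ha _))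

theorem greedyPotential_self (hδ : δ ≠ 0) {a : ℝ} (ha : 0 ≤ a) :
    greedyPotential δ a a = a ^ δ := by
  have hsplit : a ^ δ = a ^ (1 : ℝ) * a ^ (δ - 1) := by
    rw [← rpow_add' ha (by simpa using hδ)]
    congr 1
    ring
  rw [greedyPotential, hsplit, rpow_one]
  ring

theorem greedyPotential_le_of_le (hδ0 : 0 < δ) (hδ1 : δ ≤ 1) {D b a : ℝ} (hD : 0 ≤ D)
    (hDb : D ≤ b) (hba : b ≤ a) : greedyPotential δ b D ≤ greedyPotential δ a D := by
  rcases (hD.trans hDb).eq_or_lt with rfl | hb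
  · obtain rfl : D = 0 := le_antisymm hDb hD
    simpa [greedyPotential, zero_rpow hδ0.ne'] using
      mul_nonneg (sub_nonneg.2 hδ1) (rpow_nonneg (hD.trans hba) δ)
  have hamgm := rpow_le_one_sub_mul_rpow_add hδ0.le hδ1 hb.le (hb.trans_le hba)
  have hbb : b * b ^ (δ - 1) = b ^ δ := by rw [rpow_sub_one hb.ne']; field_simp
  have hDb' : δ * D * (b ^ (δ - 1) - a ^ (δ - 1)) ≤ δ * b * (b ^ (δ - 1) - a ^ (δ - 1)) := by
    have := rpow_le_rpow_of_nonpos hb hba (by linarith : δ - 1 ≤ 0)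
    gcongr
  rw [greedyPotential, greedyPotential]
  linear_combination hDb' + hamgm + δ * hbb

theorem mul_sum_range_add_greedyPotential_le (hδ0 : 0 < δ) (hδ1 : δ ≤ 1) {a D : ℕ → ℝ}
    (ha : Antitone a) (hD : ∀ i, 0 ≤ D i) (hDa : ∀ i, D i ≤ a i) (K : ℕ) :
    δ * ∑ i ∈ range K, (D i - D (i + 1)) * a i ^ (δ - 1) + greedyPotential δ (a K) (D K)
      ≤ greedyPotential δ (a 0) (D 0) := by
  induction K with
  | zero => simp
  | succ K ih =>
    have hstep := greedyPotential_le_of_le hδ0 hδ1 (hD (K + 1)) (hDa (K + 1)) (ha K.le_succ)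
    have hsplit : greedyPotential δ (a K) (D K)
        = δ * ((D K - D (K + 1)) * a K ^ (δ - 1)) + greedyPotential δ (a K) (D (K + 1)) := by
      simp only [greedyPotential]
      ring
    rw [sum_range_succ]
    linarith

theorem sum_range_sub_mul_rpow_le (hδ0 : 0 < δ) (hδ1 : δ ≤ 1) {a D : ℕ → ℝ}
    (ha : Antitone a) (ha0 : a 0 ≤ 1) (hD : ∀ i, 0 ≤ D i) (hDa : ∀ i, D i ≤ a i) (K : ℕ) :
    ∑ i ∈ range K, (D i - D (i + 1)) * a i ^ (δ - 1) ≤ 1 / δ := by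
  have ha_nonneg i : 0 ≤ a i := (hD i).trans (hDa i)
  have htel := mul_sum_range_add_greedyPotential_le hδ0 hδ1 ha hD hDa K
  have hK := greedyPotential_nonneg hδ0.le hδ1 (ha_nonneg K) (hD K)
  have h0 : greedyPotential δ (a 0) (D 0) ≤ 1 :=
    calc greedyPotential δ (a 0) (D 0) ≤ greedyPotential δ (a 0) (a 0) := by
          have := hDa 0
          unfold greedyPotential
          gcongr
          exact rpow_nonneg (ha_nonneg 0) _
      _ = a 0 ^ δ := greedyPotential_self hδ0.ne' (ha_nonneg 0)
      _ ≤ 1 := rpow_le_one (ha_nonneg 0) ha0 hδ0.le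
  rw [le_div_iff₀ hδ0]
  linarith

end Potential

theorem mul_sum_mul_logb_inv_le {ι : Type*} {t : Finset ι} {a d : ι → ℝ} {δ : ℝ}
    (ha : ∀ i ∈ t, 0 ≤ a i) (hd : ∀ i ∈ t, 0 ≤ d i) (had : ∀ i ∈ t, a i ≠ 0 → 0 < d i)
    (hsum : ∑ i ∈ t, a i = 1) (hbound : ∑ i ∈ t, d i * a i ^ (δ - 1) ≤ 1 / δ) :
    (1 - δ) * ∑ i ∈ t, a i * logb 2 (a i)⁻¹
      ≤ ∑ i ∈ t, a i * logb 2 (a i / d i) + logb 2 (1 / δ) := by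
  set z : ι → ℝ := fun i => d i * a i ^ (δ - 1) / a i
  have hz : ∀ i ∈ t, a i ≠ 0 → 0 < z i := fun i hi hai =>
    have := had i hi hai
    have := (ha i hi).lt_of_ne' hai
    by positivity
  have hterm : ∀ i ∈ t, (1 - δ) * (a i * logb 2 (a i)⁻¹) - a i * logb 2 (a i / d i)
      = a i * logb 2 (z i) := by
    intro i hi
    rcases eq_or_ne (a i) 0 with hai | hai
    · simp [hai]
    have hapos := (ha i hi).lt_of_ne' hai
    have hdpos := had i hi hai
    rw [logb_div hai hdpos.ne', logb_div (mul_pos hdpos (rpow_pos_of_pos hapos _)).ne' hai,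
      logb_mul hdpos.ne' (rpow_pos_of_pos hapos _).ne', logb_rpow_eq_mul_logb_of_pos hapos,
      logb_inv]
    ring
  have hmass : ∑ i ∈ t, a i * z i ≤ 1 / δ := by
    refine le_trans (sum_le_sum fun i hi => ?_) hbound
    rcases eq_or_ne (a i) 0 with hai | hai
    · simpa [hai] using mul_nonneg (hd i hi) (rpow_nonneg (ha i hi) _)
    · exact (mul_div_cancel₀ _ hai).le
  have hmass_pos : 0 < ∑ i ∈ t, a i * z i := by
    obtain ⟨i, hi, hai⟩ := exists_ne_zero_of_sum_ne_zero (hsum ▸ one_ne_zero)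
    refine sum_pos' (fun j hj => ?_) ⟨i, hi, mul_pos ((ha i hi).lt_of_ne' hai) (hz i hi hai)⟩
    rcases eq_or_ne (a j) 0 with haj | haj
    · simp [haj]
    · exact mul_nonneg (ha j hj) (hz j hj haj).le
  have hjensen := sum_mul_logb_le_logb_sum_mul ha hsum hz
  have hlog := logb_le_logb_of_le one_lt_two hmass_pos hmass
  rw [mul_sum, ← sub_le_iff_le_add', ← sum_sub_distrib, sum_congr rfl hterm]
  exact hjensen.trans hlog

section StableSetPolytope

variable {V : Type*} {G : SimpleGraph V}

theorem IsStableSet.subset {S T : Finset V} (hT : IsStableSet G T) (hST : S ⊆ T) :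
    IsStableSet G S :=
  fun v hv w hw => hT v (hST hv) w (hST hw)

theorem isStableSet_singleton (v : V) : IsStableSet G {v} := by
  simp [IsStableSet]

theorem isStableSet_empty : IsStableSet G ∅ := by
  simp [IsStableSet]

variable [Fintype V] [DecidableEq V]

theorem sum_le_of_mem_STAB {x : V → ℝ} (hx : x ∈ STAB G) {U : Finset V} {b : ℕ}
    (hb : ∀ T, IsStableSet G T → T ⊆ U → T.card ≤ b) : ∑ v ∈ U, x v ≤ b := by
  have hlin : IsLinearMap ℝ fun y : V → ℝ => ∑ v ∈ U, y v :=
    ⟨fun y z => sum_add_distrib, fun c y => by simp [mul_sum]⟩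
  refine convexHull_min ?_ (convex_halfSpace_le hlin (b : ℝ)) hx
  rintro _ ⟨T, hT, rfl⟩
  simp only [Set.mem_ofPred_eq, sum_boole, filter_mem_eq_inter]
  exact_mod_cast hb (U ∩ T) (hT.subset inter_subset_right) inter_subset_left

theorem const_inv_card_mem_STAB [Nonempty V] :
    (fun _ => (Fintype.card V : ℝ)⁻¹) ∈ STAB G := by
  have hn : (0 : ℝ) < Fintype.card V := by exact_mod_cast Fintype.card_pos
  have hconv : Convex ℝ (STAB G) := convex_convexHull ℝ _
  have hvertex (v : V) : (fun w => if w ∈ ({v} : Finset V) then (1 : ℝ) else 0) ∈ STAB G :=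
    subset_convexHull ℝ _ ⟨{v}, isStableSet_singleton v, rfl⟩
  convert hconv.sum_mem (t := univ) (w := fun _ => (Fintype.card V : ℝ)⁻¹)
    (fun _ _ => by positivity) (by simp [hn.ne']) (fun v _ => hvertex v) using 1
  funext u
  simp

theorem le_graphEntropy [Nonempty V] {b : ℝ}
    (h : ∀ x ∈ STAB G, (∀ v, 0 < x v) →
      b ≤ -(1 / (Fintype.card V : ℝ)) * ∑ v, logb 2 (x v)) :
    b ≤ graphEntropy G :=
  le_csInf ⟨_, _, const_inv_card_mem_STAB, fun _ => by positivity, rfl⟩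
    (by rintro _ ⟨x, hx, hxpos, rfl⟩; exact h x hx hxpos)

end StableSetPolytope

section GreedySequence

variable {V : Type*} {G : SimpleGraph V}

def natSeq {k : ℕ} (S : Fin k → Finset V) (i : ℕ) : Finset V :=
  if h : i < k then S ⟨i, h⟩ else ∅

@[simp]
theorem natSeq_val {k : ℕ} (S : Fin k → Finset V) (i : Fin k) : natSeq S i = S i := by
  simp [natSeq]

variable [Fintype V]

theorem greedyEntropy_eq_sum_range {k : ℕ} (S : Fin k → Finset V) :
    greedyEntropy S = ∑ i ∈ range k, ((natSeq S i).card / (Fintype.card V : ℝ)) *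
      logb 2 ((Fintype.card V : ℝ) / (natSeq S i).card) := by
  rw [greedyEntropy, ← Fin.sum_univ_eq_sum_range]
  simp

variable [DecidableEq V]

def remaining (T : ℕ → Finset V) (i : ℕ) : Finset V :=
  univ.filter fun v => ∀ j < i, v ∉ T j

@[simp]
theorem remaining_zero (T : ℕ → Finset V) : remaining T 0 = univ := by
  simp [remaining]

theorem remaining_succ (T : ℕ → Finset V) (i : ℕ) :
    remaining T (i + 1) = remaining T i \ T i := by
  ext v
  simp only [remaining, mem_filter, mem_univ, true_and, mem_sdiff, Nat.lt_succ_iff_lt_or_eq,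
    or_imp, forall_and, forall_eq]

theorem remaining_anti (T : ℕ → Finset V) {i j : ℕ} (hij : i ≤ j) :
    remaining T j ⊆ remaining T i :=
  fun v hv => mem_filter.2 ⟨mem_univ v, fun l hl => (mem_filter.1 hv).2 l (hl.trans_le hij)⟩

/-- `IsGreedySeq` reindexed by `ℕ` and padded with empty sets, so that the classes can be summed
over `range k` and telescoped. -/
structure IsGreedyNatSeq (G : SimpleGraph V) (k : ℕ) (T : ℕ → Finset V) : Prop where
  isStableSet : ∀ i, IsStableSet G (T i)
  disjoint : ∀ i j, i ≠ j → Disjoint (T i) (T j)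
  remaining_eq_empty : remaining T k = ∅
  card_le : ∀ i U, IsStableSet G U → U ⊆ remaining T i → U.card ≤ (T i).card

namespace IsGreedyNatSeq

variable {k : ℕ} {T : ℕ → Finset V} (hT : IsGreedyNatSeq G k T)
include hT

theorem subset_remaining (i : ℕ) : T i ⊆ remaining T i := fun v hv =>
  mem_filter.2 ⟨mem_univ v, fun j hj hvj =>
    disjoint_left.1 (hT.disjoint j i hj.ne) hvj hv⟩

theorem sum_remaining {M : Type*} [AddCommMonoid M] (f : V → M) (i : ℕ) :
    ∑ v ∈ remaining T (i + 1), f v + ∑ v ∈ T i, f v = ∑ v ∈ remaining T i, f v := by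
  rw [remaining_succ]
  exact sum_sdiff (hT.subset_remaining i)

theorem sum_range_sum {M : Type*} [AddCommGroup M] (f : V → M) :
    ∑ i ∈ range k, ∑ v ∈ T i, f v = ∑ v, f v := by
  have hstep (i : ℕ) : ∑ v ∈ T i, f v
      = ∑ v ∈ remaining T i, f v - ∑ v ∈ remaining T (i + 1), f v := by
    rw [← hT.sum_remaining f i]
    abel
  rw [sum_congr rfl fun i _ => hstep i, sum_range_sub', remaining_zero, hT.remaining_eq_empty,
    sum_empty, sub_zero]

theorem antitone_card : Antitone fun i => (T i).card :=
  antitone_nat_of_succ_le fun i => hT.card_le i _ (hT.isStableSet (i + 1))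
    ((hT.subset_remaining (i + 1)).trans (remaining_anti T i.le_succ))

theorem sum_remaining_le {x : V → ℝ} (hx : x ∈ STAB G) (i : ℕ) :
    ∑ v ∈ remaining T i, x v ≤ (T i).card :=
  sum_le_of_mem_STAB hx fun U hU hUi => hT.card_le i U hU hUi

theorem sum_card : ∑ i ∈ range k, ((T i).card : ℝ) = Fintype.card V := by
  simpa using hT.sum_range_sum fun _ => (1 : ℝ)

theorem sum_logb_le {x : V → ℝ} (hx : ∀ v, 0 < x v) :
    ∑ v, logb 2 (x v) ≤ ∑ i ∈ range k, (T i).card * logb 2 ((∑ v ∈ T i, x v) / (T i).card) := by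
  rw [← hT.sum_range_sum]
  exact sum_le_sum fun i _ => sum_logb_le_card_mul_logb_sum_div (T i) fun v _ => hx v

theorem sum_mul_rpow_le {δ : ℝ} (hδ0 : 0 < δ) (hδ1 : δ ≤ 1) {x : V → ℝ} (hx : x ∈ STAB G)
    (hx0 : ∀ v, 0 ≤ x v) :
    ∑ i ∈ range k, (∑ v ∈ T i, x v) / Fintype.card V *
      ((T i).card / (Fintype.card V : ℝ)) ^ (δ - 1) ≤ 1 / δ := by
  set n : ℝ := (Fintype.card V : ℝ)
  have hn : 0 ≤ n := Nat.cast_nonneg _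
  set a : ℕ → ℝ := fun i => (T i).card / n
  set D : ℕ → ℝ := fun i => (∑ v ∈ remaining T i, x v) / n
  have hD (i : ℕ) : (∑ v ∈ T i, x v) / n = D i - D (i + 1) := by
    simp only [D, ← sub_div, ← hT.sum_remaining x i, add_sub_cancel_left]
  have ha : Antitone a := fun i j hij => by
    have := hT.antitone_card hij
    simp only [a]
    gcongr
  have ha0 : a 0 ≤ 1 := div_le_one_of_le₀ (Nat.cast_le.2 (card_le_univ _)) hn
  simp only [hD]
  exact sum_range_sub_mul_rpow_le hδ0 hδ1 ha ha0
    (fun i => div_nonneg (sum_nonneg fun v _ => hx0 v) hn)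
    (fun i => div_le_div_of_nonneg_right (hT.sum_remaining_le hx i) hn) k

theorem one_sub_mul_entropy_le [Nonempty V] {δ : ℝ} (hδ0 : 0 < δ) (hδ1 : δ ≤ 1) {x : V → ℝ}
    (hx : x ∈ STAB G) (hxpos : ∀ v, 0 < x v) :
    (1 - δ) * ∑ i ∈ range k, ((T i).card / (Fintype.card V : ℝ)) *
        logb 2 ((Fintype.card V : ℝ) / (T i).card)
      ≤ -(1 / (Fintype.card V : ℝ)) * ∑ v, logb 2 (x v) + logb 2 (1 / δ) := by
  set n : ℝ := (Fintype.card V : ℝ)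
  have hn : 0 < n := Nat.cast_pos.2 Fintype.card_pos
  set a : ℕ → ℝ := fun i => (T i).card / n
  set c : ℕ → ℝ := fun i => ∑ v ∈ T i, x v
  have hc (i : ℕ) : a i ≠ 0 → 0 < c i / n := fun hai =>
    div_pos (sum_pos (fun v _ => hxpos v) (card_ne_zero.1 (by simpa [a, hn.ne'] using hai))) hn
  have hsum : ∑ i ∈ range k, a i = 1 := by
    rw [← sum_div, hT.sum_card, div_self hn.ne']
  have hentropy := mul_sum_mul_logb_inv_le (t := range k) (a := a) (d := fun i => c i / n)
    (fun _ _ => by positivity) (fun i _ => div_nonneg (sum_nonneg fun v _ => (hxpos v).le) hn.le)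
    (fun i _ => hc i) hsum (hT.sum_mul_rpow_le hδ0 hδ1 hx fun v => (hxpos v).le)
  have hterm (i : ℕ) : a i * logb 2 (a i / (c i / n))
      = -(1 / n) * ((T i).card * logb 2 (c i / (T i).card)) := by
    rw [div_div_div_cancel_right₀ hn.ne', ← inv_div, logb_inv]
    ring
  have hclass : ∑ i ∈ range k, a i * logb 2 (a i / (c i / n))
      ≤ -(1 / n) * ∑ v, logb 2 (x v) := by
    rw [sum_congr rfl fun i _ => hterm i, ← mul_sum]
    exact mul_le_mul_of_nonpos_left (hT.sum_logb_le hxpos) (by simp [hn.le])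
  simp only [a, inv_div] at hentropy
  linarith

end IsGreedyNatSeq

theorem IsGreedySeq.isGreedyNatSeq {k : ℕ} {S : Fin k → Finset V} (hS : IsGreedySeq G S) :
    IsGreedyNatSeq G k (natSeq S) := by
  obtain ⟨hstable, hdisj, hcover, hmax⟩ := hS
  have hrem : remaining (natSeq S) k = ∅ := by
    refine eq_empty_of_forall_notMem fun v hv => ?_
    obtain ⟨i, hi⟩ := hcover v
    exact (mem_filter.1 hv).2 i i.isLt (by simpa using hi)
  refine ⟨fun i => ?_, fun i j hij => ?_, hrem, fun i U hU hUi => ?_⟩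
  · unfold natSeq
    split_ifs
    exacts [hstable _, isStableSet_empty]
  · unfold natSeq
    split_ifs with hi hj
    exacts [hdisj _ _ (by simpa [Fin.ext_iff] using hij), disjoint_empty_right _,
      disjoint_empty_left _, disjoint_empty_left _]
  · by_cases hi : i < k
    · refine (hmax ⟨i, hi⟩ U hU fun v hv j hj => ?_).trans_eq (by simp [natSeq, hi])
      simpa using (mem_filter.1 (hUi hv)).2 j hj
    · have : U = ∅ := subset_empty.1 (hrem ▸ hUi.trans (remaining_anti _ (not_lt.1 hi)))
      simp [this]

end GreedySequence

theorem greedy_entropy_bound_general {V : Type*} [Fintype V] [DecidableEq V]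
    (G : SimpleGraph V) (hn : 1 ≤ Fintype.card V)
    {k : ℕ} (S : Fin k → Finset V) (hS : IsGreedySeq G S)
    (δ : ℝ) (hδ0 : 0 < δ) (hδ1 : δ < 1) :
    greedyEntropy S ≤ (1 / (1 - δ)) * (graphEntropy G + Real.logb 2 (1 / δ)) := by
  have : Nonempty V := Fintype.card_pos_iff.1 hn
  have hbound : (1 - δ) * greedyEntropy S - logb 2 (1 / δ) ≤ graphEntropy G :=
    le_graphEntropy fun x hx hxpos => by
      have := hS.isGreedyNatSeq.one_sub_mul_entropy_le hδ0 hδ1.le hx hxpos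
      rw [greedyEntropy_eq_sum_range]
      linarith
  rw [one_div_mul_eq_div, le_div_iff₀ (sub_pos.2 hδ1)]
  linarith

theorem greedy_entropy_bound {V : Type*} [Fintype V] [DecidableEq V]
    (G : SimpleGraph V) (hn : 1 ≤ Fintype.card V) (hG : IsPerfect G)
    {k : ℕ} (S : Fin k → Finset V) (hS : IsGreedySeq G S)
    (δ : ℝ) (hδ0 : 0 < δ) (hδ1 : δ < 1) :
    greedyEntropy S ≤ (1 / (1 - δ)) * (graphEntropy G + Real.logb 2 (1 / δ)) :=
  greedy_entropy_bound_general G hn S hS δ hδ0 hδ1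
end

section
/- For any finite poset P on n ≥ 1 elements, the n-dimensional Lebesgue volume of the stable set polytope of its comparability graph equals e(P)/n!, that is, vol(STAB(G(P))) = e(P)/n!. -/
/-- The comparability graph of a partial order `P`: distinct `v, w` are adjacent
iff they are comparable in `P`. -/
def compGraph {V : Type*} (P : PartialOrder V) : SimpleGraph V where
  Adj v w := v ≠ w ∧ (P.le v w ∨ P.le w v)
  symm := ⟨fun v w h => ⟨h.1.symm, h.2.symm⟩⟩
  loopless := ⟨fun v h => h.1 rfl⟩

/-- The entropy of a poset: the entropy of its comparability graph. -/
noncomputable def posetEntropy {V : Type*} [Fintype V] [DecidableEq V]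
    (P : PartialOrder V) : ℝ :=
  graphEntropy (compGraph P)

/-- The number `e(P)` of linear extensions of a finite poset `P`, counted as
order-preserving bijections onto `Fin n`. -/
noncomputable def numLinExt {V : Type*} [Fintype V] (P : PartialOrder V) : ℕ :=
  Nat.card {f : V ≃ Fin (Fintype.card V) // ∀ v w : V, P.le v w → f v ≤ f w}

/-!
Stanley's transfer map `T x a = x a - max_{b < a} x b` (with `max ∅ = 0`) is a bijection of `ℝ^V`
that maps the order polytope of `P` (monotone maps `V → [0, 1]`) onto the chain polytope, and the
chain polytope is `STAB(G(P))`: antichain indicators satisfy the chain inequalities, and `T` sends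
the vertices of every simplex of the order polytope to antichain indicators.

The order polytope is triangulated by the Kuhn simplices
`{x | 0 ≤ x (f⁻¹ 0) ≤ ⋯ ≤ x (f⁻¹ (n - 1)) ≤ 1}` of the linear extensions `f` of `P`; each has
volume `1 / n!`, since the `n!` Kuhn simplices of all orderings tile the unit cube up to null
sets. On each of them `T` is linear and unitriangular with respect to `f`, hence volume
preserving, and since `T` is injective their images still overlap only in null sets.
-/

open MeasureTheory Set

open scoped Nat ENNReal

section KuhnSimplex

variable {α : Type*} {n : ℕ}

def kuhnSimplex (f : α ≃ Fin n) : Set (α → ℝ) :=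
  Icc 0 1 ∩ {x | ∀ a b, f a ≤ f b → x a ≤ x b}

theorem isCompact_kuhnSimplex (f : α ≃ Fin n) : IsCompact (kuhnSimplex f) := by
  refine isCompact_Icc.inter_right ?_
  simp only [ofPred_forall]
  exact isClosed_iInter fun a => isClosed_iInter fun b => isClosed_iInter fun _ =>
    isClosed_le (continuous_apply a) (continuous_apply b)

theorem equiv_eq_of_le_iff {f g : α ≃ Fin n} (h : ∀ a b, f a ≤ f b ↔ g a ≤ g b) : f = g := by
  let e : Fin n ≃o Fin n :=
    ⟨f.symm.trans g, fun {i j} => by simpa using (h (f.symm i) (f.symm j)).symm⟩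
  have he : e = OrderIso.refl _ := Subsingleton.elim _ _
  exact Equiv.ext fun a => by simpa [e] using congr($he (f a)).symm

theorem kuhnSimplex_inter_subset {f g : α ≃ Fin n} (hfg : f ≠ g) :
    kuhnSimplex f ∩ kuhnSimplex g ⊆ {x | ¬ Function.Injective x} := by
  rintro x ⟨hf, hg⟩ hx
  have key : ∀ {f g : α ≃ Fin n}, x ∈ kuhnSimplex f → x ∈ kuhnSimplex g →
      ∀ a b, f a ≤ f b → g a ≤ g b := by
    intro f g hf hg a b hab
    by_contra hba
    have := hx (le_antisymm (hf.2 a b hab) (hg.2 b a (not_le.1 hba).le))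
    simp [this] at hba
  exact hfg (equiv_eq_of_le_iff fun a b => ⟨key hf hg a b, key hg hf a b⟩)

theorem kuhnSimplex_subset_convexHull (f : α ≃ Fin n) :
    kuhnSimplex f ⊆ convexHull ℝ (range fun i : ℕ => {a | i ≤ (f a : ℕ)}.indicator 1) := by
  intro x hx
  -- `τ (i + 1)` is the `i`-th smallest coordinate of `x`
  let τ : ℕ → ℝ := fun
    | 0 => 0
    | i + 1 => if h : i < n then x (f.symm ⟨i, h⟩) else 1
  have hτ : Monotone τ := by
    refine monotone_nat_of_le_succ fun i => ?_
    rcases i with _ | i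
    · simp only [τ]
      split_ifs
      exacts [hx.1.1 _, zero_le_one]
    · simp only [τ]
      split_ifs
      · exact hx.2 _ _ (by simp)
      · exact hx.1.2 _
      · omega
      · rfl
  have hτf : ∀ a, τ (f a + 1) = x a := by simp [τ]
  have hx_eq : x = ∑ i ∈ Finset.range (n + 1),
      (τ (i + 1) - τ i) • {a | i ≤ (f a : ℕ)}.indicator 1 := by
    funext a
    have hrange : (Finset.range (n + 1)).filter (· ≤ (f a : ℕ)) = Finset.range (f a + 1) := by
      ext i
      simp only [Finset.mem_filter, Finset.mem_range]
      omega
    simp only [Finset.sum_apply, Pi.smul_apply, indicator_apply, mem_ofPred_eq, Pi.one_apply,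
      smul_eq_mul, mul_ite, mul_one, mul_zero]
    rw [← Finset.sum_filter, hrange, Finset.sum_range_sub, hτf]
    simp [τ]
  rw [hx_eq]
  refine (convex_convexHull ℝ _).sum_mem (fun i _ => sub_nonneg.2 (hτ i.le_succ)) ?_
    fun i _ => subset_convexHull ℝ _ ⟨i, rfl⟩
  rw [Finset.sum_range_sub]
  simp [τ]

variable [Fintype α]

theorem exists_equiv_fin_le_iff {β : Type*} [LinearOrder β] (key : α → β)
    (hkey : Function.Injective key) :
    ∃ f : α ≃ Fin (Fintype.card α), ∀ a b, f a ≤ f b ↔ key a ≤ key b := by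
  let : LinearOrder α := LinearOrder.lift' key hkey
  exact ⟨(monoEquivOfFin α rfl).symm.toEquiv, fun a b => (monoEquivOfFin α rfl).symm.le_iff_le⟩

theorem exists_equiv_fin_sorting {β : Type*} [LinearOrder β] (x : α → ℝ) (ℓ : α → β)
    (hℓ : Function.Injective ℓ) :
    ∃ f : α ≃ Fin (Fintype.card α),
      ∀ a b, (f a ≤ f b → x a ≤ x b) ∧ (x a ≤ x b → ℓ a ≤ ℓ b → f a ≤ f b) := by
  obtain ⟨f, hf⟩ := exists_equiv_fin_le_iff (fun a => toLex (x a, ℓ a))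
    fun a b h => hℓ (congrArg Prod.snd (congrArg ofLex h))
  refine ⟨f, fun a b => ⟨fun h => ?_, fun hx hℓ => (hf a b).2 ?_⟩⟩
  · rcases Prod.Lex.le_iff.1 ((hf a b).1 h) with h | h
    exacts [h.le, h.1.le]
  · exact Prod.Lex.le_iff.2 (hx.lt_or_eq.imp id fun h => ⟨h, hℓ⟩)

theorem iUnion_kuhnSimplex : ⋃ f : α ≃ Fin (Fintype.card α), kuhnSimplex f = Icc 0 1 := by
  refine subset_antisymm (iUnion_subset fun f => inter_subset_left) fun x hx => ?_
  obtain ⟨f, hf⟩ := exists_equiv_fin_sorting x (Fintype.equivFin α) (Equiv.injective _)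
  exact mem_iUnion.2 ⟨f, hx, fun a b => (hf a b).1⟩

theorem volume_kuhnSimplex_eq (f g : α ≃ Fin n) :
    volume (kuhnSimplex f) = volume (kuhnSimplex g) := by
  rw [← (volume_preserving_arrowCongr' (g.trans f.symm) (MeasurableEquiv.refl ℝ)
    (MeasurePreserving.id volume)).measure_preimage_equiv]
  congr 1
  ext x
  set σ := f.trans g.symm
  have hσ : ∀ a, f a = g (σ a) := by simp [σ]
  simp only [kuhnSimplex, MeasurableEquiv.arrowCongr', Equiv.arrowCongr', mem_preimage,
    mem_inter_iff, mem_Icc, Pi.le_def, mem_ofPred_eq, Pi.zero_apply, Pi.one_apply,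
    MeasurableEquiv.coe_mk, Equiv.arrowCongr_apply, EquivLike.coe_coe, Equiv.symm_trans,
    Equiv.symm_symm, Equiv.coe_trans, Function.comp_apply, hσ, Equiv.symm_apply_apply,
    MeasurableEquiv.refl_apply, σ.forall_congr_right (q := fun a => 0 ≤ x a),
    σ.forall_congr_right (q := fun a => x a ≤ 1), and_congr_right_iff, and_imp]
  exact fun _ _ => ⟨fun h a b => by simpa using h (σ.symm a) (σ.symm b), fun h a b => h (σ a) (σ b)⟩

theorem volume_setOf_not_injective : volume {x : α → ℝ | ¬ Function.Injective x} = 0 := by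
  classical
  have hsub : {x : α → ℝ | ¬ Function.Injective x} ⊆ ⋃ a, ⋃ b, ⋃ (_ : a ≠ b),
      (LinearMap.ker ((LinearMap.proj a : (α → ℝ) →ₗ[ℝ] ℝ) - LinearMap.proj b) : Set (α → ℝ)) := by
    intro x hx
    simp only [Function.Injective, not_forall] at hx
    obtain ⟨a, b, hab, hne⟩ := hx
    simpa [sub_eq_zero] using ⟨a, b, hne, hab⟩
  refine measure_mono_null hsub (measure_iUnion_null fun a => measure_iUnion_null fun b =>
    measure_iUnion_null fun hab => Measure.addHaar_submodule _ _ fun htop => ?_)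
  have := htop ▸ Submodule.mem_top (x := (Pi.single a 1 : α → ℝ))
  simp [hab.symm] at this

theorem aedisjoint_kuhnSimplex {f g : α ≃ Fin n} (hfg : f ≠ g) :
    AEDisjoint volume (kuhnSimplex f) (kuhnSimplex g) :=
  measure_mono_null (kuhnSimplex_inter_subset hfg) volume_setOf_not_injective

theorem volume_kuhnSimplex (f : α ≃ Fin n) : volume (kuhnSimplex f) = (n ! : ℝ≥0∞)⁻¹ := by
  classical
  obtain rfl : n = Fintype.card α := by simpa using (Fintype.card_congr f).symm
  have hsum : ∑ g : α ≃ Fin (Fintype.card α), volume (kuhnSimplex g) = 1 := by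
    rw [← measure_biUnion_finset₀ (fun g _ h _ hgh => aedisjoint_kuhnSimplex hgh)
      (fun g _ => (isCompact_kuhnSimplex g).isClosed.measurableSet.nullMeasurableSet)]
    simp [iUnion_kuhnSimplex, Real.volume_Icc_pi]
  rw [Finset.sum_congr rfl fun g _ => volume_kuhnSimplex_eq g f, Finset.sum_const,
    Finset.card_univ, Fintype.card_equiv f, nsmul_eq_mul] at hsum
  exact ENNReal.eq_inv_of_mul_eq_one_left (by rwa [mul_comm] at hsum)

end KuhnSimplex

section OrderPolytope

variable (α : Type*) [PartialOrder α]

def orderPolytope : Set (α → ℝ) := Icc 0 1 ∩ {x | Monotone x}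

def chainPolytope : Set (α → ℝ) :=
  {y | 0 ≤ y ∧ ∀ s : Finset α, IsChain (· ≤ ·) (s : Set α) → ∑ a ∈ s, y a ≤ 1}

open Classical in
noncomputable def linearExtensions [Fintype α] : Finset (α ≃ Fin (Fintype.card α)) :=
  Finset.univ.filter fun f => Monotone f

variable {α}

/-- Stanley's transfer map; the supremum over the empty set of predecessors is `0`. -/
noncomputable def transfer (x : α → ℝ) (a : α) : ℝ := x a - ⨆ b : Iio a, x b

noncomputable def cumulate [WellFoundedLT α] (y : α → ℝ) : α → ℝ :=
  WellFoundedLT.fix fun a rec => y a + ⨆ b : Iio a, rec b b.2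

theorem mem_linearExtensions [Fintype α] {f : α ≃ Fin (Fintype.card α)} :
    f ∈ linearExtensions α ↔ Monotone f := by
  simp [linearExtensions]

theorem convex_chainPolytope : Convex ℝ (chainPolytope α) := by
  rintro x ⟨hx0, hx⟩ y ⟨hy0, hy⟩ a b ha hb hab
  refine ⟨by positivity, fun s hs => ?_⟩
  calc ∑ c ∈ s, (a • x + b • y) c = a * ∑ c ∈ s, x c + b * ∑ c ∈ s, y c := by
        simp [Finset.mul_sum, Finset.sum_add_distrib]
    _ ≤ a * 1 + b * 1 := by gcongr; exacts [hx s hs, hy s hs]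
    _ = 1 := by rw [mul_one, mul_one, hab]

section WellFounded

variable [WellFoundedLT α]

theorem transfer_injective : Function.Injective (transfer : (α → ℝ) → α → ℝ) := by
  intro x y h
  funext a
  induction a using WellFoundedLT.induction with
  | _ a ih =>
    have := congrFun h a
    simp only [transfer] at this
    rwa [iSup_congr fun b : Iio a => ih b b.2, sub_left_inj] at this

theorem cumulate_apply (y : α → ℝ) (a : α) :
    cumulate y a = y a + ⨆ b : Iio a, cumulate y b :=
  WellFoundedLT.fix_eq _ _

theorem transfer_cumulate (y : α → ℝ) : transfer (cumulate y) = y := by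
  funext a
  rw [transfer, cumulate_apply, add_sub_cancel_right]

theorem cumulate_nonneg {y : α → ℝ} (hy : 0 ≤ y) : 0 ≤ cumulate y := by
  intro a
  induction a using WellFoundedLT.induction with
  | _ a ih =>
    rw [cumulate_apply]
    exact add_nonneg (hy a) (Real.iSup_nonneg fun b => ih b b.2)

variable [Finite α] {y : α → ℝ}

theorem monotone_cumulate (hy : 0 ≤ y) : Monotone (cumulate y) := by
  intro a b hab
  obtain rfl | hab := hab.eq_or_lt
  · rfl
  rw [cumulate_apply y b]
  calc cumulate y a ≤ ⨆ c : Iio b, cumulate y c :=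
        le_ciSup (f := fun c : Iio b => cumulate y c) (Finite.bddAbove_range _) ⟨a, hab⟩
    _ ≤ y b + ⨆ c : Iio b, cumulate y c := le_add_of_nonneg_left (hy b)

theorem exists_isChain_sum_eq_cumulate (y : α → ℝ) (a : α) :
    ∃ s : Finset α, IsChain (· ≤ ·) (s : Set α) ∧ (∀ b ∈ s, b ≤ a) ∧
      ∑ b ∈ s, y b = cumulate y a := by
  classical
  induction a using WellFoundedLT.induction with
  | _ a ih =>
    rw [cumulate_apply]
    rcases isEmpty_or_nonempty (Iio a) with h | h
    · exact ⟨{a}, by simp, by simp, by simp⟩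
    obtain ⟨⟨b, hba⟩, hb⟩ := exists_eq_ciSup_of_finite (f := fun b : Iio a => cumulate y b)
    obtain ⟨s, hs, hsb, hsum⟩ := ih b hba
    have has : a ∉ s := fun has => (hsb a has).not_gt hba
    refine ⟨insert a s, ?_, Finset.forall_mem_insert _ _ _ |>.2
      ⟨le_rfl, fun c hc => (hsb c hc).trans hba.le⟩, ?_⟩
    · rw [Finset.coe_insert]
      exact hs.insert fun c hc _ => Or.inr ((hsb c hc).trans hba.le)
    · rw [Finset.sum_insert has, hsum, ← hb]

theorem cumulate_mem_orderPolytope (hy : y ∈ chainPolytope α) :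
    cumulate y ∈ orderPolytope α := by
  refine ⟨⟨cumulate_nonneg hy.1, fun a => ?_⟩, monotone_cumulate hy.1⟩
  obtain ⟨s, hs, -, hsum⟩ := exists_isChain_sum_eq_cumulate y a
  exact hsum ▸ hy.2 s hs

theorem chainPolytope_subset_image_transfer :
    chainPolytope α ⊆ transfer '' orderPolytope α :=
  fun y hy => ⟨cumulate y, cumulate_mem_orderPolytope hy, transfer_cumulate y⟩

end WellFounded

end OrderPolytope

section Triangulation

variable {α : Type*} [PartialOrder α] {n : ℕ}

theorem orderPolytope_eq_biUnion_kuhnSimplex [Fintype α] :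
    orderPolytope α = ⋃ f ∈ linearExtensions α, kuhnSimplex f := by
  refine subset_antisymm (fun x hx => ?_) (iUnion₂_subset fun f hf => ?_)
  · obtain ⟨f, hf⟩ := exists_equiv_fin_sorting x toLinearExtension fun a b h => h
    refine mem_biUnion (mem_linearExtensions.2 fun a b hab => ?_) ⟨hx.1, fun a b => (hf a b).1⟩
    exact (hf a b).2 (hx.2 hab) (toLinearExtension.monotone hab)
  · rintro x ⟨hx, hxf⟩
    exact ⟨hx, fun a b hab => hxf a b (mem_linearExtensions.1 hf hab)⟩

theorem exists_linearMap_eqOn_transfer [Fintype α] {f : α ≃ Fin n} (hf : Monotone f) :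
    ∃ L : (α → ℝ) →ₗ[ℝ] α → ℝ, LinearMap.det L = 1 ∧ EqOn transfer L (kuhnSimplex f) := by
  classical
  -- On `kuhnSimplex f` the supremum in `transfer x a` is attained at the predecessor `b` of `a`
  -- with `last a b`, so `transfer` agrees there with `1 - N`, which is unitriangular along `f`.
  let last : α → α → Prop := fun a b => b < a ∧ ∀ c < a, f c ≤ f b
  let N : Matrix α α ℝ := Matrix.of fun a b => if last a b then 1 else 0
  refine ⟨Matrix.toLin' (1 - N), ?_, fun x hx => funext fun a => ?_⟩
  · rw [LinearMap.det_toLin', ← Matrix.det_reindex_self f, Matrix.det_of_isLowerTriangular]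
    · simp [N, last]
    · intro i j hij
      replace hij : i < j := OrderDual.toDual_lt_toDual.1 hij
      have hne : f.symm i ≠ f.symm j := by simpa using hij.ne
      have hlast : ¬ last (f.symm i) (f.symm j) := fun h =>
        absurd (hf h.1.le) (by simpa using hij.not_ge)
      simp [N, hne, hlast]
  · have hsup : ⨆ b : Iio a, x b = ∑ b, N a b * x b := by
      rcases isEmpty_or_nonempty (Iio a) with h | h
      · have : ∀ b, ¬ last a b := fun b hb => h.elim ⟨b, hb.1⟩
        simp [N, this]
      obtain ⟨⟨b, hba⟩, hb⟩ := Finite.exists_max fun c : Iio a => f c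
      have hlast : last a b := ⟨hba, fun c hc => hb ⟨c, hc⟩⟩
      have hN : ∀ c, c ≠ b → N a c = 0 := fun c hcb => by
        simpa [N] using fun hc : last a c =>
          hcb (f.injective ((hlast.2 c hc.1).antisymm (hc.2 b hba)))
      rw [Finset.sum_eq_single b (fun c _ hcb => by rw [hN c hcb, zero_mul]) (by simp)]
      simp only [N, Matrix.of_apply, if_pos hlast, one_mul]
      exact le_antisymm (ciSup_le fun c => hx.2 _ _ (hb c))
        (le_ciSup (f := fun c : Iio a => x c) (Finite.bddAbove_range _) ⟨b, hba⟩)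
    rw [transfer, hsup, Matrix.toLin'_apply, Matrix.sub_mulVec, Matrix.one_mulVec]
    rfl

theorem transfer_indicator_of_isUpperSet {U : Set α} (hU : IsUpperSet U) :
    transfer (U.indicator 1) = {a | Minimal (· ∈ U) a}.indicator 1 := by
  classical
  funext a
  have hle : ∀ c, U.indicator (1 : α → ℝ) c ≤ 1 := fun c => by
    by_cases hc : c ∈ U <;> simp [hc]
  have hsup : ⨆ b : Iio a, U.indicator (1 : α → ℝ) b = if ∃ b < a, b ∈ U then 1 else 0 := by
    split_ifs with h
    · obtain ⟨b, hba, hb⟩ := h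
      refine le_antisymm (Real.iSup_le (fun c => hle c) zero_le_one) ?_
      simpa [hb] using le_ciSup (f := fun c : Iio a => U.indicator (1 : α → ℝ) c)
        ⟨1, forall_mem_range.2 fun c => hle c⟩ ⟨b, hba⟩
    · exact (iSup_congr fun b : Iio a => indicator_of_notMem (fun hb => h ⟨b, b.2, hb⟩) _).trans
        Real.iSup_const_zero
  have hmin : Minimal (· ∈ U) a ↔ a ∈ U ∧ ¬ ∃ b < a, b ∈ U := by
    simp [minimal_iff_forall_lt]
  rw [transfer, hsup]
  simp only [indicator_apply, mem_ofPred_eq, hmin, Pi.one_apply]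
  by_cases ha : a ∈ U
  · by_cases h : ∃ b < a, b ∈ U <;> simp [ha, h]
  · have : ¬ ∃ b < a, b ∈ U := fun ⟨b, hba, hb⟩ => ha (hU hba.le hb)
    simp [ha, this]

end Triangulation

section StablePolytope

variable {α : Type*} [PartialOrder α]

theorem isStableSet_compGraph_iff {s : Finset α} :
    IsStableSet (compGraph ‹PartialOrder α›) s ↔ IsAntichain (· ≤ ·) (s : Set α) := by
  simp only [IsStableSet, compGraph, IsAntichain, Set.Pairwise, Finset.mem_coe, Pi.compl_apply,
    compl_iff_not]
  exact ⟨fun h a ha b hb hab hle => h a ha b hb ⟨hab, Or.inl hle⟩,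
    fun h a ha b hb ⟨hab, hle⟩ => hle.elim (h ha hb hab) (h hb ha (Ne.symm hab))⟩

variable [Fintype α] [DecidableEq α]

theorem indicator_mem_STAB_compGraph {s : Set α} (hs : IsAntichain (· ≤ ·) s) :
    s.indicator 1 ∈ STAB (compGraph ‹PartialOrder α›) := by
  classical
  refine subset_convexHull ℝ _ ⟨s.toFinset, isStableSet_compGraph_iff.2 (by simpa using hs), ?_⟩
  ext a
  simp [indicator_apply]

theorem STAB_compGraph_subset_chainPolytope :
    STAB (compGraph ‹PartialOrder α›) ⊆ chainPolytope α := by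
  refine convexHull_min ?_ convex_chainPolytope
  rintro _ ⟨S, hS, rfl⟩
  refine ⟨fun a => by positivity, fun s hs => ?_⟩
  have hsub := inter_subsingleton_of_isChain_of_isAntichain hs (isStableSet_compGraph_iff.1 hS)
  rw [Finset.sum_boole]
  exact_mod_cast Finset.card_le_one.2 fun a ha b hb =>
    hsub (by simpa using ha) (by simpa using hb)

theorem transfer_image_kuhnSimplex_subset_STAB {n : ℕ} {f : α ≃ Fin n} (hf : Monotone f) :
    transfer '' kuhnSimplex f ⊆ STAB (compGraph ‹PartialOrder α›) := by
  obtain ⟨L, -, hL⟩ := exists_linearMap_eqOn_transfer hf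
  let vertex : ℕ → α → ℝ := fun i => {a | i ≤ (f a : ℕ)}.indicator 1
  have hvertex : ∀ i, vertex i ∈ kuhnSimplex f := fun i => by
    refine ⟨⟨fun a => ?_, fun a => ?_⟩, fun a b (hab : (f a : ℕ) ≤ f b) => ?_⟩ <;>
      simp only [vertex, indicator_apply, mem_ofPred_eq, Pi.one_apply, Pi.zero_apply] <;>
      split_ifs <;> first | omega | norm_num
  rw [hL.image_eq]
  refine (image_mono (kuhnSimplex_subset_convexHull f)).trans ?_
  rw [L.image_convexHull]
  refine convexHull_min ?_ (convex_convexHull ℝ _)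
  rintro _ ⟨_, ⟨i, rfl⟩, rfl⟩
  rw [← hL (hvertex i), transfer_indicator_of_isUpperSet fun a b hab ha => ?_]
  · exact indicator_mem_STAB_compGraph (setOfPred_minimal_antichain _)
  · exact le_trans (show i ≤ (f a : ℕ) from ha) (hf hab)

theorem STAB_compGraph_eq_biUnion :
    STAB (compGraph ‹PartialOrder α›) = ⋃ f ∈ linearExtensions α, transfer '' kuhnSimplex f := by
  refine subset_antisymm (fun y hy => ?_)
    (iUnion₂_subset fun f hf => transfer_image_kuhnSimplex_subset_STAB (mem_linearExtensions.1 hf))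
  obtain ⟨x, hx, rfl⟩ :=
    chainPolytope_subset_image_transfer (STAB_compGraph_subset_chainPolytope hy)
  rw [orderPolytope_eq_biUnion_kuhnSimplex, mem_iUnion₂] at hx
  obtain ⟨f, hf, hxf⟩ := hx
  exact mem_biUnion hf (mem_image_of_mem _ hxf)

end StablePolytope

section Volume

variable {α : Type*} [PartialOrder α] [Fintype α] {n : ℕ}

theorem volume_transfer_image_kuhnSimplex {f : α ≃ Fin n} (hf : Monotone f) :
    volume (transfer '' kuhnSimplex f) = (n ! : ℝ≥0∞)⁻¹ := by
  obtain ⟨L, hdet, hL⟩ := exists_linearMap_eqOn_transfer hf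
  rw [hL.image_eq, Measure.addHaar_image_linearMap, hdet, volume_kuhnSimplex]
  simp

theorem nullMeasurableSet_transfer_image_kuhnSimplex {f : α ≃ Fin n} (hf : Monotone f) :
    NullMeasurableSet (transfer '' kuhnSimplex f) := by
  obtain ⟨L, -, hL⟩ := exists_linearMap_eqOn_transfer hf
  rw [hL.image_eq]
  exact ((isCompact_kuhnSimplex f).image
    L.continuous_of_finiteDimensional).isClosed.measurableSet.nullMeasurableSet

theorem aedisjoint_transfer_image_kuhnSimplex {f g : α ≃ Fin n} (hf : Monotone f) (hfg : f ≠ g) :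
    AEDisjoint volume (transfer '' kuhnSimplex f) (transfer '' kuhnSimplex g) := by
  obtain ⟨L, -, hL⟩ := exists_linearMap_eqOn_transfer hf
  rw [AEDisjoint, ← image_inter transfer_injective, (hL.mono inter_subset_left).image_eq]
  refine measure_mono_null (image_mono (kuhnSimplex_inter_subset hfg)) ?_
  rw [Measure.addHaar_image_linearMap, volume_setOf_not_injective, mul_zero]

theorem numLinExt_eq_card_linearExtensions :
    numLinExt ‹PartialOrder α› = (linearExtensions α).card := by
  classical
  rw [numLinExt, Nat.card_eq_fintype_card, Fintype.card_subtype]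
  rfl

end Volume

open MeasureTheory in
theorem volume_STAB_compGraph_general {V : Type*} [Fintype V] [DecidableEq V]
    (P : PartialOrder V) :
    volume (STAB (compGraph P)) =
      ENNReal.ofReal ((numLinExt P : ℝ) / (Nat.factorial (Fintype.card V) : ℝ)) := by
  let := P
  rw [STAB_compGraph_eq_biUnion, measure_biUnion_finset₀
      (fun f hf g _ hfg => aedisjoint_transfer_image_kuhnSimplex (mem_linearExtensions.1 hf) hfg)
      (fun f hf => nullMeasurableSet_transfer_image_kuhnSimplex (mem_linearExtensions.1 hf)),
    Finset.sum_congr rfl fun f hf => volume_transfer_image_kuhnSimplex (mem_linearExtensions.1 hf),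
    Finset.sum_const, nsmul_eq_mul, numLinExt_eq_card_linearExtensions,
    ENNReal.ofReal_div_of_pos (by positivity), ENNReal.ofReal_natCast, ENNReal.ofReal_natCast,
    div_eq_mul_inv]

open MeasureTheory in
/-- Stanley: the Lebesgue volume of the stable set polytope of the comparability
graph of `P` (i.e. the chain polytope of `P`) equals `e(P)/n!`. -/
theorem volume_STAB_compGraph {V : Type*} [Fintype V] [DecidableEq V]
    (P : PartialOrder V) (hn : 1 ≤ Fintype.card V) :
    volume (STAB (compGraph P)) =
      ENNReal.ofReal ((numLinExt P : ℝ) / (Nat.factorial (Fintype.card V) : ℝ)) :=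
  volume_STAB_compGraph_general P
end

section
/- Let P be a finite poset on ground set V with |V| = n ≥ 1, and let x ∈ STAB(G(P)) have all coordinates strictly positive. Then there exists an interval order I on the same ground set V such that I extends P and H(I) ≤ −(1/n) Σ_{v∈V} log₂ x_v. -/
/-- `I` is an interval order: it admits an interval representation by real
intervals `(l v, r v)` with `v <_I w` iff `r v ≤ l w`. -/
def IsIntervalOrder {V : Type*} (I : PartialOrder V) : Prop :=
  ∃ l r : V → ℝ, (∀ v, l v < r v) ∧ ∀ v w, I.lt v w ↔ r v ≤ l w

/-- `Q` extends `P`: same ground set, and every relation of `P` holds in `Q`. -/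
def Extends {V : Type*} (Q P : PartialOrder V) : Prop :=
  ∀ v w : V, P.le v w → Q.le v w

open Finset MeasureTheory

section StablePolytope

variable {V : Type*} [Fintype V] [DecidableEq V] {G : SimpleGraph V} {x : V → ℝ}

lemma isClosed_STAB : IsClosed (STAB G) := by
  refine Set.Finite.isClosed_convexHull ℝ ((Set.finite_range
    fun S : Finset V => fun v => if v ∈ S then (1 : ℝ) else 0).subset ?_)
  rintro _ ⟨S, -, rfl⟩
  exact ⟨S, rfl⟩

lemma sum_le_one_of_mem_STAB (hx : x ∈ STAB G) {K : Finset V} (hK : G.IsClique (K : Set V)) :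
    ∑ v ∈ K, x v ≤ 1 := by
  refine convexHull_min ?_ (convex_halfSpace_le (f := fun y : V → ℝ => ∑ v ∈ K, y v)
    ⟨fun _ _ => sum_add_distrib, fun _ _ => by simp [mul_sum]⟩ 1) hx
  rintro _ ⟨S, hS, rfl⟩
  have hcard : #(K ∩ S) ≤ 1 := by
    refine card_le_one.2 fun a ha b hb => by_contra fun hab => ?_
    rw [mem_inter] at ha hb
    exact hS a ha.2 b hb.2 (hK ha.1 hb.1 hab)
  simpa [sum_boole] using hcard

lemma le_one_of_mem_STAB (hx : x ∈ STAB G) (v : V) : x v ≤ 1 := by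
  simpa using sum_le_one_of_mem_STAB hx (K := {v}) (by simp)

lemma graphEntropy_le (hx : x ∈ STAB G) (hpos : ∀ v, 0 < x v) :
    graphEntropy G ≤ -(1 / (Fintype.card V : ℝ)) * ∑ v, Real.logb 2 (x v) := by
  refine csInf_le ⟨0, ?_⟩ ⟨x, hx, hpos, rfl⟩
  rintro _ ⟨y, hy, hypos, rfl⟩
  have hlog : ∑ v, Real.logb 2 (y v) ≤ 0 := sum_nonpos fun v _ =>
    Real.logb_nonpos one_lt_two (hypos v).le (le_one_of_mem_STAB hy v)
  have : (0 : ℝ) ≤ 1 / (Fintype.card V : ℝ) := by positivity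
  nlinarith

end StablePolytope

lemma isClique_compGraph_of_isChain {V : Type*} (P : PartialOrder V) {C : Set V}
    (hC : IsChain P.le C) : (compGraph P).IsClique C :=
  fun _ hv _ hw hvw => ⟨hvw, hC hv hw hvw⟩

section IntervalOrder

variable {V : Type*}

abbrev intervalOrderOf (l r : V → ℝ) (h : ∀ v, l v < r v) : PartialOrder V where
  le v w := v = w ∨ r v ≤ l w
  lt v w := r v ≤ l w
  le_refl v := Or.inl rfl
  le_trans := by
    rintro a b c (rfl | hab) (rfl | hbc)
    exacts [Or.inl rfl, Or.inr hbc, Or.inr hab, Or.inr (hab.trans ((h b).le.trans hbc))]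
  lt_iff_le_not_ge := by
    intro a b
    refine ⟨fun hab => ⟨Or.inr hab, ?_⟩, ?_⟩
    · rintro (rfl | hba)
      exacts [not_le.2 (h _) hab, by linarith [h a, h b]]
    · rintro ⟨rfl | hab, hba⟩
      exacts [absurd (Or.inl rfl) hba, hab]
  le_antisymm := by
    rintro a b (rfl | hab) (hba | hba)
    exacts [rfl, rfl, hba.symm, by linarith [h a, h b]]

lemma isIntervalOrder_intervalOrderOf (l r : V → ℝ) (h : ∀ v, l v < r v) :
    IsIntervalOrder (intervalOrderOf l r h) :=
  ⟨l, r, h, fun _ _ => Iff.rfl⟩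

variable [Fintype V]

lemma isStableSet_filter_mem_Ico (l r : V → ℝ) (h : ∀ v, l v < r v) (s : ℝ) :
    IsStableSet (compGraph (intervalOrderOf l r h))
      (univ.filter fun u => s ∈ Set.Ico (l u) (r u)) := by
  intro u hu w hw ⟨huw, hcomp⟩
  simp only [mem_filter, Set.mem_Ico] at hu hw
  rcases hcomp with (rfl | h') | (rfl | h')
  exacts [huw rfl, by linarith, huw rfl, by linarith]

variable [DecidableEq V]

lemma sub_mem_STAB_intervalOrderOf (l r : V → ℝ) (h : ∀ v, l v < r v) (hl : ∀ v, 0 ≤ l v)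
    (hr : ∀ v, r v ≤ 1) : r - l ∈ STAB (compGraph (intervalOrderOf l r h)) := by
  have : IsProbabilityMeasure (volume.restrict (Set.Icc (0 : ℝ) 1)) := ⟨by simp⟩
  let f : ℝ → V → ℝ := fun s u => (Set.Ico (l u) (r u)).indicator 1 s
  have hfi : ∀ v, Integrable (f · v) (volume.restrict (Set.Icc 0 1)) := fun v =>
    (integrable_const 1).indicator measurableSet_Ico
  have hmean : ∫ s, f s ∂volume.restrict (Set.Icc 0 1) = r - l := by
    funext v
    rw [eval_integral hfi, integral_indicator_one measurableSet_Ico, measureReal_restrict_apply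
      measurableSet_Ico, Set.inter_eq_left.2 (Set.Ico_subset_Icc_self.trans
      (Set.Icc_subset_Icc (hl v) (hr v))), Real.volume_real_Ico_of_le (h v).le]
    rfl
  rw [← hmean]
  refine convex_convexHull ℝ _ |>.integral_mem isClosed_STAB (ae_of_all _ fun s => ?_)
    (Integrable.of_eval hfi)
  refine subset_convexHull ℝ _ ⟨_, isStableSet_filter_mem_Ico l r h s, ?_⟩
  funext u
  simp [f, Set.indicator_apply]

end IntervalOrder

section ChainWeight

variable {V : Type*} [Finite V] [PartialOrder V] (x : V → ℝ)

def chainsBelow (v : V) : Set (Finset V) :=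
  {C | IsChain (· ≤ ·) (C : Set V) ∧ ∀ u ∈ C, u ≤ v}

noncomputable def maxChainWeight (v : V) : ℝ :=
  ⨆ C : chainsBelow v, ∑ u ∈ C.1, x u

variable {x}

lemma sum_le_maxChainWeight {C : Finset V} {v : V} (hC : IsChain (· ≤ ·) (C : Set V))
    (hCv : ∀ u ∈ C, u ≤ v) : ∑ u ∈ C, x u ≤ maxChainWeight x v :=
  le_ciSup (f := fun C : chainsBelow v => ∑ u ∈ C.1, x u) (Finite.bddAbove_range _) ⟨C, hC, hCv⟩

lemma exists_sum_eq_maxChainWeight (v : V) :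
    ∃ C : Finset V, IsChain (· ≤ ·) (C : Set V) ∧ (∀ u ∈ C, u ≤ v) ∧
      ∑ u ∈ C, x u = maxChainWeight x v := by
  have : Nonempty (chainsBelow v) := ⟨⟨∅, by simp [chainsBelow]⟩⟩
  obtain ⟨⟨C, hC, hCv⟩, hsum⟩ :=
    exists_eq_ciSup_of_finite (f := fun C : chainsBelow v => ∑ u ∈ C.1, x u)
  exact ⟨C, hC, hCv, hsum⟩

lemma le_maxChainWeight_self (v : V) : x v ≤ maxChainWeight x v := by
  simpa using sum_le_maxChainWeight (x := x) (C := {v}) (by simp) (by simp)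

lemma maxChainWeight_add_le {v w : V} (hvw : v < w) :
    maxChainWeight x v + x w ≤ maxChainWeight x w := by
  classical
  obtain ⟨C, hC, hCv, hsum⟩ := exists_sum_eq_maxChainWeight (x := x) v
  have hwC : w ∉ C := fun hw => (hCv w hw).not_gt hvw
  have hchain : IsChain (· ≤ ·) (insert w C : Set V) :=
    hC.insert fun u hu _ => Or.inr ((hCv u hu).trans hvw.le)
  rw [← hsum, add_comm, ← sum_insert hwC]
  refine sum_le_maxChainWeight (by simpa using hchain) fun u hu => ?_
  rcases mem_insert.1 hu with rfl | hu
  exacts [le_rfl, (hCv u hu).trans hvw.le]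

end ChainWeight

theorem exists_intervalOrder_extension_general {V : Type*} [Fintype V] [DecidableEq V]
    (P : PartialOrder V)
    (x : V → ℝ) (hx : x ∈ STAB (compGraph P)) (hpos : ∀ v, 0 < x v) :
    ∃ I : PartialOrder V, IsIntervalOrder I ∧ Extends I P ∧
      posetEntropy I ≤
        -(1 / (Fintype.card V : ℝ)) * ∑ v, Real.logb 2 (x v) := by
  let _ := P
  set r := maxChainWeight x
  have hlr : ∀ v, (r - x) v < r v := fun v => sub_lt_self _ (hpos v)
  have hr : ∀ v, r v ≤ 1 := fun v => by
    obtain ⟨C, hC, -, hsum⟩ := exists_sum_eq_maxChainWeight (x := x) v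
    calc r v = ∑ u ∈ C, x u := hsum.symm
      _ ≤ 1 := sum_le_one_of_mem_STAB hx (isClique_compGraph_of_isChain P hC)
  have hl : ∀ v, 0 ≤ (r - x) v := fun v => sub_nonneg.2 (le_maxChainWeight_self v)
  refine ⟨intervalOrderOf (r - x) r hlr, isIntervalOrder_intervalOrderOf _ _ _, ?_,
    graphEntropy_le (by simpa using sub_mem_STAB_intervalOrderOf _ _ hlr hl hr) hpos⟩
  intro v w hvw
  rcases eq_or_lt_of_le hvw with rfl | hlt
  · exact Or.inl rfl
  · exact Or.inr (le_sub_iff_add_le.2 (maxChainWeight_add_le hlt))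

/-- From any strictly positive point `x` of the stable set polytope of the
comparability graph of `P`, one gets an interval order `I` extending `P` with
`H(I) ≤ -(1/n) ∑_v log₂ x_v`. -/
theorem exists_intervalOrder_extension {V : Type*} [Fintype V] [DecidableEq V]
    (P : PartialOrder V) (hn : 1 ≤ Fintype.card V)
    (x : V → ℝ) (hx : x ∈ STAB (compGraph P)) (hpos : ∀ v, 0 < x v) :
    ∃ I : PartialOrder V, IsIntervalOrder I ∧ Extends I P ∧
      posetEntropy I ≤
        -(1 / (Fintype.card V : ℝ)) * ∑ v, Real.logb 2 (x v) :=
  exists_intervalOrder_extension_general P x hx hpos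
end

section
/- Let I be a finite interval order on ground set V and let A_1, …, A_k be a greedy antichain sequence of I, i.e., a partition of V into antichains such that each A_i is a maximum-cardinality antichain of I restricted to V ∖ (A_1 ∪ … ∪ A_{i−1}). Then there exists a permutation σ of {1, …, k} such that the weak order W on V with layers A_{σ(1)}, …, A_{σ(k)} (defined by v <_W w iff v ∈ A_{σ(i)}, w ∈ A_{σ(j)} with i < j) extends I. -/
/-!
Represent `I` by intervals `(l v, r v)` and rank each layer by the smallest right endpoint
of its intervals. If `v <_I w` then every interval of the layer of `w` overlaps the interval of `w`
(the layer is an antichain), so it ends after `l w ≥ r v`; hence the layer of `v` has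
strictly smaller rank. Listing the layers by increasing rank gives a weak order extending `I`.
-/

section WeakOrder

variable {V α : Type*} [Preorder α]

abbrev weakOrderOfRank (f : V → α) : PartialOrder V where
  le v w := v = w ∨ f v < f w
  lt v w := f v < f w
  le_refl _ := Or.inl rfl
  le_trans := by
    rintro a b c (rfl | hab) (rfl | hbc)
    exacts [Or.inl rfl, Or.inr hbc, Or.inr hab, Or.inr (hab.trans hbc)]
  le_antisymm := by
    rintro a b (rfl | hab) (hba | hba)
    exacts [rfl, rfl, hba.symm, absurd hba hab.not_gt]
  lt_iff_le_not_ge a b := by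
    refine ⟨fun hab => ⟨Or.inr hab, ?_⟩, ?_⟩
    · rintro (rfl | hba)
      exacts [hab.false, hab.not_gt hba]
    · rintro ⟨rfl | hab, hba⟩
      exacts [absurd (Or.inl rfl) hba, hab]

theorem weakOrderOfRank_lt_iff {f : V → α} {v w : V} :
    (weakOrderOfRank f).lt v w ↔ f v < f w :=
  Iff.rfl

theorem extends_weakOrderOfRank {P : PartialOrder V} {f : V → α}
    (hf : ∀ v w, P.lt v w → f v < f w) : Extends (weakOrderOfRank f) P := by
  let _ : PartialOrder V := P
  intro v w hvw
  rcases eq_or_ne v w with rfl | hne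
  · exact Or.inl rfl
  · exact Or.inr (hf v w (lt_of_le_of_ne hvw hne))

end WeakOrder

theorem Tuple.sort_symm_lt_of_lt {α : Type*} [LinearOrder α] {n : ℕ} (g : Fin n → α)
    {i j : Fin n} (hij : g i < g j) : (sort g).symm i < (sort g).symm j :=
  (monotone_sort g).reflect_lt (by simpa only [Function.comp_apply, Equiv.apply_symm_apply])

theorem IsStableSet.not_lt {V : Type*} {P : PartialOrder V} {S : Finset V}
    (hS : IsStableSet (compGraph P) S) {u w : V} (hu : u ∈ S) (hw : w ∈ S) : ¬ P.lt u w := by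
  let _ : PartialOrder V := P
  exact fun hlt => hS u hu w hw ⟨hlt.ne, Or.inl hlt.le⟩

section IntervalRepresentation

variable {V α : Type*} [LinearOrder α]

def minRight (r : V → α) (S : Finset V) : WithTop α :=
  S.inf fun u => (r u : WithTop α)

theorem minRight_lt_minRight_of_lt {P : PartialOrder V} {l r : V → α}
    (hlr : ∀ v, l v < r v) (hrep : ∀ v w, P.lt v w ↔ r v ≤ l w) {S T : Finset V}
    (hT : IsStableSet (compGraph P) T) {v w : V} (hv : v ∈ S) (hw : w ∈ T)
    (hvw : P.lt v w) : minRight r S < minRight r T := by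
  have hrv : r v ≤ l w := (hrep v w).mp hvw
  have hends_after : ∀ u ∈ T, r v < r u := by
    intro u hu
    rcases eq_or_ne u w with rfl | hne
    · exact hrv.trans_lt (hlr u)
    · exact hrv.trans_lt (not_le.mp fun h => hT.not_lt hu hw ((hrep u w).mpr h))
  calc minRight r S ≤ r v := Finset.inf_le hv
    _ < minRight r T :=
      (Finset.lt_inf_iff (WithTop.coe_lt_top _)).mpr fun u hu => WithTop.coe_lt_coe.mpr
        (hends_after u hu)

end IntervalRepresentation

theorem greedy_antichains_of_intervalOrder_reorder_general {V : Type*} [Fintype V]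
    (I : PartialOrder V) (hI : IsIntervalOrder I)
    {k : ℕ} (A : Fin k → Finset V) (hA : IsGreedySeq (compGraph I) A) :
    ∃ σ : Equiv.Perm (Fin k), ∃ W : PartialOrder V,
      (∀ v w : V, W.lt v w ↔ ∃ i j : Fin k, i < j ∧ v ∈ A (σ i) ∧ w ∈ A (σ j)) ∧
      Extends W I := by
  obtain ⟨l, r, hlr, hrep⟩ := hI
  obtain ⟨hstable, hdisj, hcover, -⟩ := hA
  choose layer hlayer using hcover
  have mem_iff : ∀ v i, v ∈ A i ↔ layer v = i := fun v i =>
    ⟨fun hv => by_contra fun hne => Finset.disjoint_left.mp (hdisj _ _ hne) (hlayer v) hv,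
      fun h => h ▸ hlayer v⟩
  let σ := Tuple.sort fun i => minRight r (A i)
  refine ⟨σ, weakOrderOfRank fun v => σ.symm (layer v), fun v w => ?_,
    extends_weakOrderOfRank fun v w hvw => ?_⟩
  · simp only [weakOrderOfRank_lt_iff, mem_iff, ← Equiv.symm_apply_eq]
    exact ⟨fun h => ⟨_, _, h, rfl, rfl⟩, by rintro ⟨i, j, h, rfl, rfl⟩; exact h⟩
  · exact Tuple.sort_symm_lt_of_lt _
      (minRight_lt_minRight_of_lt hlr hrep (hstable _) (hlayer v) (hlayer w) hvw)

/-- If `A 0, …, A (k-1)` is a greedy antichain sequence of an interval order `I`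
(each `A i` a maximum antichain of `I` restricted to the remaining elements),
then the layers can be permuted by some `σ` so that the weak order `W` with
layers `A (σ 0), …, A (σ (k-1))` extends `I`. -/
theorem greedy_antichains_of_intervalOrder_reorder {V : Type*} [Fintype V]
    [DecidableEq V] (I : PartialOrder V) (hI : IsIntervalOrder I)
    {k : ℕ} (A : Fin k → Finset V) (hA : IsGreedySeq (compGraph I) A) :
    ∃ σ : Equiv.Perm (Fin k), ∃ W : PartialOrder V,
      (∀ v w : V, W.lt v w ↔ ∃ i j : Fin k, i < j ∧ v ∈ A (σ i) ∧ w ∈ A (σ j)) ∧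
      Extends W I :=
  greedy_antichains_of_intervalOrder_reorder_general I hI A hA
end

section
/- Let P be a finite poset with comparability graph G = G(P). Then every weak order W extending P satisfies H(W) ≥ H_χ(G), where H_χ(G) denotes the chromatic entropy of G. -/
/-- `W` is a weak order: its ground set is partitioned into layers
`A 0, …, A (k-1)` (necessarily antichains), and `v <_W w` holds exactly when
`v` lies in an earlier layer than `w`. -/
def IsWeakOrder {V : Type*} (W : PartialOrder V) : Prop :=
  ∃ (k : ℕ) (A : Fin k → Finset V),
    (∀ v : V, ∃! i, v ∈ A i) ∧
    (∀ v w : V, W.lt v w ↔ ∃ i j : Fin k, i < j ∧ v ∈ A i ∧ w ∈ A j)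

/-- The entropy `-∑ i (|C i|/n) log₂ (|C i|/n)` of a coloring with color
classes `C 0, …, C (k-1)`. -/
noncomputable def coloringEntropy {V : Type*} [Fintype V] {k : ℕ}
    (C : Fin k → Finset V) : ℝ :=
  -∑ i, ((C i).card / (Fintype.card V : ℝ)) *
    Real.logb 2 ((C i).card / (Fintype.card V : ℝ))

/-- The chromatic entropy of `G`: the minimum entropy of a proper coloring
(a partition of the vertices into stable sets). -/
noncomputable def chromaticEntropy {V : Type*} [Fintype V] [DecidableEq V]
    (G : SimpleGraph V) : ℝ :=
  sInf {h : ℝ | ∃ (k : ℕ) (C : Fin k → Finset V),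
    (∀ i, IsStableSet G (C i)) ∧ (∀ v : V, ∃! i, v ∈ C i) ∧
    h = coloringEntropy C}


/-!
Let `A₀ < A₁ < ⋯` be the layers of the weak order `W`. They are antichains of `W`, hence
stable in `G(P)`, so they form a proper coloring of `G(P)`; it remains to see that its entropy
is at most `H(W)`. Any two vertices in different layers are comparable in `W`, so every stable set
of `G(W)` lies inside one layer, and `∑_v x_v / |A(v)| ≤ 1` holds on `STAB(G(W))`, where `A(v)` is
the layer of `v`. For positive such `x`, Gibbs' inequality (from `log t ≤ t - 1`) applied to
`x_v` against `|A(v)| / n` gives `-(1/n) ∑_v log₂ x_v ≥ -(1/n) ∑_v log₂ (|A(v)| / n)`, and the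
right-hand side is the entropy of the coloring by layers.
-/

open Finset

section

variable {V : Type*}

lemma IsStableSet.anti {G H : SimpleGraph V} (hGH : G ≤ H) {S : Finset V}
    (hS : IsStableSet H S) : IsStableSet G S :=
  fun v hv w hw hadj => hS v hv w hw (hGH hadj)

lemma compGraph_mono {P Q : PartialOrder V} (hQP : Extends Q P) :
    compGraph P ≤ compGraph Q :=
  fun v w ⟨hne, hle⟩ => ⟨hne, hle.imp (hQP v w) (hQP w v)⟩

lemma Real.sum_log_le_sum_log_of_sum_div_le [Fintype V] {x y : V → ℝ}
    (hx : ∀ v, 0 < x v) (hy : ∀ v, 0 < y v) (h : ∑ v, x v / y v ≤ Fintype.card V) :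
    ∑ v, Real.log (x v) ≤ ∑ v, Real.log (y v) := by
  have hgibbs : ∀ v, Real.log (x v) - Real.log (y v) ≤ x v / y v - 1 := fun v => by
    rw [← Real.log_div (hx v).ne' (hy v).ne']
    exact Real.log_le_sub_one_of_pos (div_pos (hx v) (hy v))
  have hsum := sum_le_sum fun v (_ : v ∈ univ) => hgibbs v
  simp only [sum_sub_distrib, sum_const, card_univ, nsmul_eq_mul, mul_one] at hsum
  linarith

section StableSetPolytope

variable [Fintype V] [DecidableEq V] {G : SimpleGraph V}

lemma sum_mul_le_one_of_mem_STAB {a : V → ℝ}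
    (ha : ∀ S, IsStableSet G S → ∑ v ∈ S, a v ≤ 1) {x : V → ℝ} (hx : x ∈ STAB G) :
    ∑ v, a v * x v ≤ 1 := by
  have hlin : IsLinearMap ℝ fun y : V → ℝ => ∑ v, a v * y v :=
    ⟨fun y z => by simp only [Pi.add_apply, mul_add, sum_add_distrib],
     fun c y => by simp only [Pi.smul_apply, smul_eq_mul, mul_sum, mul_left_comm]⟩
  refine convexHull_min ?_ (convex_halfSpace_le hlin 1) hx
  rintro _ ⟨S, hS, rfl⟩
  simpa [mul_ite] using ha S hS

variable (G) in
lemma exists_pos_mem_STAB : ∃ x ∈ STAB G, ∀ v, 0 < x v := by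
  rcases isEmpty_or_nonempty V with hV | hV
  · exact ⟨_, subset_convexHull ℝ _ ⟨∅, by simp [IsStableSet], rfl⟩, isEmptyElim⟩
  · refine ⟨fun _ => 1 / Fintype.card V, ?_, fun _ => by positivity⟩
    have huniform : (fun _ => 1 / Fintype.card V : V → ℝ) =
        ∑ v, (1 / Fintype.card V : ℝ) • fun w => if w ∈ ({v} : Finset V) then 1 else 0 := by
      ext w
      simp
    rw [huniform]
    refine (convex_convexHull ℝ _).sum_mem (fun _ _ => by positivity) ?_
      fun v _ => subset_convexHull ℝ _ ⟨{v}, by simp [IsStableSet], rfl⟩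
    simp [card_univ]

end StableSetPolytope

lemma coloringEntropy_nonneg [Fintype V] {k : ℕ} (C : Fin k → Finset V) :
    0 ≤ coloringEntropy C := by
  rw [coloringEntropy, neg_nonneg]
  refine sum_nonpos fun i _ => ?_
  have h0 : 0 ≤ ((C i).card : ℝ) / Fintype.card V := by positivity
  have h1 : ((C i).card : ℝ) / Fintype.card V ≤ 1 :=
    div_le_one_of_le₀ (by exact_mod_cast card_le_univ _) (by positivity)
  exact mul_nonpos_of_nonneg_of_nonpos h0 (Real.logb_nonpos one_lt_two h0 h1)

lemma chromaticEntropy_le_coloringEntropy [Fintype V] [DecidableEq V] {G : SimpleGraph V}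
    {k : ℕ} {C : Fin k → Finset V} (hstable : ∀ i, IsStableSet G (C i))
    (hpart : ∀ v, ∃! i, v ∈ C i) : chromaticEntropy G ≤ coloringEntropy C :=
  csInf_le ⟨0, by rintro _ ⟨_, C', -, -, rfl⟩; exact coloringEntropy_nonneg C'⟩
    ⟨k, C, hstable, hpart, rfl⟩

section Partition

variable {k : ℕ} {C : Fin k → Finset V} {cls : V → Fin k}

lemma coloringEntropy_eq_sum_logb [Fintype V] (hcls : ∀ v i, v ∈ C i ↔ cls v = i) :
    coloringEntropy C =
      -(1 / Fintype.card V) * ∑ v, Real.logb 2 ((C (cls v)).card / Fintype.card V) := by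
  have hfiber : ∀ i, univ.filter (fun v => cls v = i) = C i := fun i => by
    ext v
    simp [hcls]
  rw [coloringEntropy, ← sum_fiberwise univ cls, mul_sum, ← sum_neg_distrib]
  refine sum_congr rfl fun i _ => ?_
  rw [sum_congr (hfiber i) fun v hv => by rw [(hcls v i).1 hv], sum_const, nsmul_eq_mul]
  ring

lemma sum_inv_card_class_le_one {G : SimpleGraph V} (hcls : ∀ v i, v ∈ C i ↔ cls v = i)
    (hadj : ∀ i j, i ≠ j → ∀ v ∈ C i, ∀ w ∈ C j, G.Adj v w) {S : Finset V}
    (hS : IsStableSet G S) : ∑ v ∈ S, ((C (cls v)).card : ℝ)⁻¹ ≤ 1 := by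
  rcases S.eq_empty_or_nonempty with rfl | ⟨v₀, hv₀⟩
  · simp
  have hsame : ∀ v ∈ S, cls v = cls v₀ := fun v hv => by
    by_contra hne
    exact hS v hv v₀ hv₀ (hadj _ _ hne v ((hcls v _).2 rfl) v₀ ((hcls v₀ _).2 rfl))
  have hsub : S ⊆ C (cls v₀) := fun v hv => (hcls v _).2 (hsame v hv)
  calc ∑ v ∈ S, ((C (cls v)).card : ℝ)⁻¹ = ∑ _v ∈ S, ((C (cls v₀)).card : ℝ)⁻¹ :=
        sum_congr rfl fun v hv => by rw [hsame v hv]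
    _ = S.card / (C (cls v₀)).card := by rw [sum_const, nsmul_eq_mul, div_eq_mul_inv]
    _ ≤ 1 := div_le_one_of_le₀ (by exact_mod_cast card_le_card hsub) (by positivity)

end Partition

theorem coloringEntropy_le_graphEntropy [Fintype V] [DecidableEq V] {G : SimpleGraph V}
    {k : ℕ} {C : Fin k → Finset V} (hpart : ∀ v, ∃! i, v ∈ C i)
    (hadj : ∀ i j, i ≠ j → ∀ v ∈ C i, ∀ w ∈ C j, G.Adj v w) :
    coloringEntropy C ≤ graphEntropy G := by
  choose cls hmem huniq using hpart
  have hcls : ∀ v i, v ∈ C i ↔ cls v = i := fun v i =>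
    ⟨fun h => (huniq v i h).symm, fun h => h ▸ hmem v⟩
  set n : ℝ := (Fintype.card V : ℝ)
  rw [coloringEntropy_eq_sum_logb hcls]
  obtain ⟨x₀, hx₀, hpos₀⟩ := exists_pos_mem_STAB G
  refine le_csInf ⟨_, x₀, hx₀, hpos₀, rfl⟩ ?_
  rintro _ ⟨x, hx, hpos, rfl⟩
  have hn : ∀ v : V, 0 < n := fun v => Nat.cast_pos.2 (Fintype.card_pos_iff.2 ⟨v⟩)
  have hclass : ∀ v, 0 < ((C (cls v)).card : ℝ) / n := fun v =>
    div_pos (Nat.cast_pos.2 (card_pos.2 ⟨v, hmem v⟩)) (hn v)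
  have hvalid : ∑ v, x v / (((C (cls v)).card : ℝ) / n) ≤ n := by
    have hineq := sum_mul_le_one_of_mem_STAB (fun _ => sum_inv_card_class_le_one hcls hadj) hx
    calc ∑ v, x v / (((C (cls v)).card : ℝ) / n)
        = n * ∑ v, ((C (cls v)).card : ℝ)⁻¹ * x v := by
          rw [mul_sum]
          exact sum_congr rfl fun v _ => by field_simp
      _ ≤ n := mul_le_of_le_one_right (Nat.cast_nonneg _) hineq
  refine mul_le_mul_of_nonpos_left ?_ (by simp only [neg_nonpos]; positivity)
  simp only [Real.logb, ← sum_div]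
  exact div_le_div_of_nonneg_right
    (Real.sum_log_le_sum_log_of_sum_div_le hpos hclass hvalid) (Real.log_pos one_lt_two).le

section WeakOrder

variable {W : PartialOrder V} {k : ℕ} {A : Fin k → Finset V}

lemma isStableSet_compGraph_of_weakOrder_layer (hpart : ∀ v, ∃! i, v ∈ A i)
    (hlt : ∀ v w, W.lt v w ↔ ∃ i j : Fin k, i < j ∧ v ∈ A i ∧ w ∈ A j) (i : Fin k) :
    IsStableSet (compGraph W) (A i) := by
  have hantichain : ∀ v ∈ A i, ∀ w ∈ A i, v ≠ w → ¬ W.le v w := fun v hv w hw hne hle => by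
    obtain ⟨i', j', hij, hv', hw'⟩ := (hlt v w).1
      ((W.lt_iff_le_not_ge v w).2 ⟨hle, fun hge => hne (W.le_antisymm v w hle hge)⟩)
    rw [(hpart v).unique hv' hv, (hpart w).unique hw' hw] at hij
    exact lt_irrefl i hij
  rintro v hv w hw ⟨hne, hle | hle⟩
  · exact hantichain v hv w hw hne hle
  · exact hantichain w hw v hv hne.symm hle

lemma compGraph_adj_of_mem_weakOrder_layers (hpart : ∀ v, ∃! i, v ∈ A i)
    (hlt : ∀ v w, W.lt v w ↔ ∃ i j : Fin k, i < j ∧ v ∈ A i ∧ w ∈ A j) {i j : Fin k}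
    (hij : i ≠ j) {v w : V} (hv : v ∈ A i) (hw : w ∈ A j) : (compGraph W).Adj v w := by
  refine ⟨fun h => hij ((hpart v).unique hv (h ▸ hw)), ?_⟩
  rcases hij.lt_or_gt with h | h
  · exact Or.inl ((W.lt_iff_le_not_ge v w).1 ((hlt v w).2 ⟨i, j, h, hv, hw⟩)).1
  · exact Or.inr ((W.lt_iff_le_not_ge w v).1 ((hlt w v).2 ⟨j, i, h, hw, hv⟩)).1

end WeakOrder

end

theorem chromaticEntropy_le_weakOrder_entropy_general {V : Type*} [Fintype V]
    [DecidableEq V] (P : PartialOrder V)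
    (W : PartialOrder V) (hW : IsWeakOrder W) (hext : Extends W P) :
    chromaticEntropy (compGraph P) ≤ posetEntropy W := by
  obtain ⟨k, A, hpart, hlt⟩ := hW
  calc chromaticEntropy (compGraph P) ≤ coloringEntropy A :=
        chromaticEntropy_le_coloringEntropy
          (fun i => (isStableSet_compGraph_of_weakOrder_layer hpart hlt i).anti
            (compGraph_mono hext)) hpart
    _ ≤ posetEntropy W := coloringEntropy_le_graphEntropy hpart fun _ _ hij _ hv _ hw =>
        compGraph_adj_of_mem_weakOrder_layers hpart hlt hij hv hw

/-- Every weak order extension `W` of a poset `P` has entropy at least the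
chromatic entropy of the comparability graph of `P`. -/
theorem chromaticEntropy_le_weakOrder_entropy {V : Type*} [Fintype V]
    [DecidableEq V] (P : PartialOrder V) (hn : 1 ≤ Fintype.card V)
    (W : PartialOrder V) (hW : IsWeakOrder W) (hext : Extends W P) :
    chromaticEntropy (compGraph P) ≤ posetEntropy W :=
  chromaticEntropy_le_weakOrder_entropy_general P W hW hext
end
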